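/- If a sequence (s_n) of complex numbers is a polynomial in 1/n of degree at most N, i.e. s_n = ∑_{j=0}^{N} a_j / n^j for all n ≥ 1, then its N-th Richardson transform s_n^{(N)} = ∑_{k=0}^{N} s_{n+k} (n+k)^N (-1)^{k+N} / (k! (N-k)!) equals a_0 for every n ≥ 1. -/

import Mathlib

/-!
Multiplying `s m` by `m ^ N` turns it into the polynomial `P m = ∑ a (N - i) m ^ i` of degree
at most `N` with `N`-th coefficient `a 0`. By Newton's formula the Richardson transform is
`Δ^N P (n) / N!`, and the `N`-th forward difference of such a polynomial is `a 0 * N!`.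
-/

open Finset Nat

theorem fwdDiff_iter_sum_range_succ_mul_pow {R : Type*} [CommRing R] (n : ℕ) (c : ℕ → R)
    (y : R) :
    (fwdDiff 1)^[n] (fun r : R ↦ ∑ i ∈ range (n + 1), c i * r ^ i) y = c n * n ! := by
  have hsplit : (fun r : R ↦ ∑ i ∈ range (n + 1), c i * r ^ i)
      = (fun r ↦ ∑ i ∈ range n, c i * r ^ i) + c n • fun r ↦ r ^ n := by
    ext r; simp [sum_range_succ]
  rw [hsplit, fwdDiff_iter_add, fwdDiff_iter_const_smul, fwdDiff_iter_sum_mul_pow_eq_zero,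
    fwdDiff_iter_eq_factorial]
  simp

theorem sum_shift_mul_neg_one_pow_div_factorial {K : Type*} [Field K] [CharZero K] (f : K → K)
    (n : ℕ) (y : K) :
    ∑ k ∈ range (n + 1), f (y + k) * (-1) ^ (k + n) / ((k ! : K) * ((n - k)! : K))
      = (fwdDiff 1)^[n] f y / n ! := by
  rw [fwdDiff_iter_eq_sum_shift, sum_div]
  refine sum_congr rfl fun k hk ↦ ?_
  have hkn : k ≤ n := Nat.lt_succ_iff.mp (mem_range.mp hk)
  have hsign : (-1 : K) ^ (k + n) = (-1) ^ (n - k) := by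
    obtain ⟨m, rfl⟩ := Nat.exists_eq_add_of_le hkn
    rw [Nat.add_sub_cancel_left, ← add_assoc, ← two_mul, pow_add, pow_mul, neg_one_sq, one_pow,
      one_mul]
  have hchoose : (n.choose k : K) ≠ 0 := Nat.cast_ne_zero.mpr (Nat.choose_pos hkn).ne'
  rw [hsign, zsmul_eq_mul, nsmul_one, ← Nat.choose_mul_factorial_mul_factorial hkn]
  push_cast
  field_simp

theorem sum_div_pow_mul_pow {K : Type*} [Field K] (N : ℕ) (a : ℕ → K) {x : K} (hx : x ≠ 0) :
    (∑ j ∈ range (N + 1), a j / x ^ j) * x ^ N = ∑ i ∈ range (N + 1), a (N - i) * x ^ i := by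
  rw [sum_mul, ← sum_range_reflect (fun i ↦ a (N - i) * x ^ i)]
  refine sum_congr rfl fun j hj ↦ ?_
  have hjN : j ≤ N := Nat.lt_succ_iff.mp (mem_range.mp hj)
  rw [Nat.add_sub_cancel, Nat.sub_sub_self hjN, pow_sub₀ _ hx hjN]
  ring

theorem stmt_7 (N : ℕ) (s : ℕ → ℂ) (a : ℕ → ℂ)
    (h : ∀ n : ℕ, 1 ≤ n → s n = ∑ j ∈ Finset.range (N + 1), a j / (n : ℂ) ^ j) :
    ∀ n : ℕ, 1 ≤ n →
      ∑ k ∈ Finset.range (N + 1),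
        s (n + k) * ((n : ℂ) + (k : ℂ)) ^ N * (-1) ^ (k + N)
          / ((Nat.factorial k : ℂ) * (Nat.factorial (N - k) : ℂ)) = a 0 := by
  intro n hn
  set P : ℂ → ℂ := fun x ↦ ∑ i ∈ range (N + 1), a (N - i) * x ^ i
  have hsP : ∀ k : ℕ, s (n + k) * ((n : ℂ) + k) ^ N = P (n + k) := fun k ↦ by
    have hx : ((n : ℂ) + k) ≠ 0 := by exact_mod_cast (by omega : n + k ≠ 0)
    rw [h (n + k) (by omega), Nat.cast_add, sum_div_pow_mul_pow N a hx]
  have hP : (fwdDiff 1)^[N] P n = a 0 * N ! := by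
    rw [fwdDiff_iter_sum_range_succ_mul_pow, Nat.sub_self]
  rw [sum_congr rfl fun k _ ↦ by rw [hsP k], sum_shift_mul_neg_one_pow_div_factorial, hP,
    mul_div_cancel_right₀ _ (by exact_mod_cast N.factorial_ne_zero)]
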